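/- Let M be an SDDM matrix with indices partitioned into blocks F and C such that M_{FF} is α-strongly diagonally dominant for some α ≥ 4, and let M_{FF} = X_{FF} + L_{FF} be the unique decomposition with X_{FF} a nonnegative diagonal matrix (with positive diagonal entries) and L_{FF} a Laplacian. Let Z = ½·X_{FF}^{−1} + ½·X_{FF}^{−1}·(X_{FF} − L_{FF})·X_{FF}^{−1}·(X_{FF} − L_{FF})·X_{FF}^{−1}, and let M^{last} be the matrix obtained from M by replacing its FF block with Z^{−1}. Define M₁ = [[X_{FF}, M_{FC}],[M_{CF}, diag(M_{CF}·X_{FF}^{−1}·M_{FC}·1_C)]] and M₂ = [[X_{FF}, (X_{FF} − L_{FF})·X_{FF}^{−1}·M_{FC}],[M_{CF}·X_{FF}^{−1}·(X_{FF} − L_{FF}), 2·M_{CC} − diag(M_{CF}·X_{FF}^{−1}·M_{FC}·1_C)]], where diag(x) is the diagonal matrix with diagonal given by the vector x and 1_C is the all-ones vector on C. Then Schur(M₁, F) is a Laplacian matrix, M₂ is an SDDM matrix, and Schur(M^{last}, F) = ½·( Schur(M₁, F) + Schur(M₂, F) ). -/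

import Mathlib

open Matrix BigOperators Finset
open scoped Classical

noncomputable section

/-- Loewner order: `PSDLE A B` means `A ⪯ B`, i.e. `B - A` is positive semidefinite. -/
def PSDLE {n : Type*} [Fintype n] (A B : Matrix n n ℝ) : Prop :=
  (B - A).PosSemidef

/-- `ApproxEps A ε B` means `A ≈_ε B`, i.e. `e^ε • B ⪰ A ⪰ e^{-ε} • B`. -/
def ApproxEps {n : Type*} [Fintype n] (A : Matrix n n ℝ) (ε : ℝ) (B : Matrix n n ℝ) : Prop :=
  PSDLE A (Real.exp ε • B) ∧ PSDLE (Real.exp (-ε) • B) A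

/-- `M` is α-strongly diagonally dominant:
`M_{ii} ≥ (1+α)·Σ_{j≠i} |M_{ij}|` for every `i`. -/
def IsStronglyDD {n : Type*} [Fintype n] [DecidableEq n] (α : ℝ) (M : Matrix n n ℝ) : Prop :=
  ∀ i, (1 + α) * ∑ j ∈ Finset.univ.erase i, |M i j| ≤ M i i

/-- A Laplacian matrix: symmetric, nonpositive off-diagonal entries, zero row sums. -/
def IsLaplacian {n : Type*} [Fintype n] (L : Matrix n n ℝ) : Prop :=
  L.IsSymm ∧ (∀ i j, i ≠ j → L i j ≤ 0) ∧ ∀ i, ∑ j, L i j = 0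

/-- An SDDM matrix: symmetric positive definite, nonpositive off-diagonal entries,
and each diagonal entry at least the sum of absolute values of the off-diagonal
entries in its row. -/
def IsSDDM {n : Type*} [Fintype n] [DecidableEq n] (M : Matrix n n ℝ) : Prop :=
  M.IsSymm ∧ M.PosDef ∧ (∀ i j, i ≠ j → M i j ≤ 0) ∧
    ∀ i, ∑ j ∈ Finset.univ.erase i, |M i j| ≤ M i i

/-- The Schur complement `Schur(M, F)` eliminating the first (`F`) block:
`M_CC - M_CF · M_FF⁻¹ · M_FC`. -/
def schurElimF {F C : Type*} [Fintype F] [Fintype C] [DecidableEq F]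
    (M : Matrix (F ⊕ C) (F ⊕ C) ℝ) : Matrix C C ℝ :=
  M.toBlocks₂₂ - M.toBlocks₂₁ * M.toBlocks₁₁⁻¹ * M.toBlocks₁₂

/-- The Schur complement `Schur(M, S)` eliminating the second (`S`) block:
`M_CC - M_CS · M_SS⁻¹ · M_SC`. -/
def schurElimS {C S : Type*} [Fintype C] [Fintype S] [DecidableEq S]
    (M : Matrix (C ⊕ S) (C ⊕ S) ℝ) : Matrix C C ℝ :=
  M.toBlocks₁₁ - M.toBlocks₁₂ * M.toBlocks₂₂⁻¹ * M.toBlocks₂₁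

/-!
Write `X = diagonal d`, `P = M_CF X⁻¹ M_FC` and `W = X⁻¹(X - L)X⁻¹(X - L)X⁻¹`, so that
`Z = ½X⁻¹ + ½W`. The identity for `Schur(M^last, F)` is then pure algebra, and
`Schur(M₁, F) = diag(P·1) - P` is a Laplacian because `P` is symmetric and entrywise nonnegative.

Strong diagonal dominance gives `2 L_ii ≤ X_ii`, so `X - L` is entrywise nonnegative with row sums
`d` and is positive semidefinite. Hence the off-diagonal blocks of `M₂` are nonpositive, and their
row sums are controlled by those of `M_FC` (the rows of `X⁻¹ M_FC` have absolute sum at most `1`).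
For positive definiteness, the Schur complement of `M₂` splits as
`Schur(M, F) + (M_CC - diag(P·1)) + M_CF((X + L)⁻¹ - W)M_FC`, and `(X + L)⁻¹ ⪰ W` is the scalar
inequality `(1 - t)² ≤ (1 + t)⁻¹` on `[0, 1]` applied to `Y = X^{-1/2} L X^{-1/2}`.
-/

namespace Matrix

section

variable {n : Type*} [Fintype n] [DecidableEq n]

theorem IsSymm.posSemidef_of_sum_abs_le {A : Matrix n n ℝ} (hA : A.IsSymm)
    (hdom : ∀ i, ∑ j ∈ univ.erase i, |A i j| ≤ A i i) : A.PosSemidef := by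
  have hH : A.IsHermitian := isHermitian_iff_isSymm.mpr hA
  refine hH.posSemidef_iff_eigenvalues_nonneg.mpr fun i => ?_
  obtain ⟨k, hk⟩ := eigenvalue_mem_ball (A := A) <|
    Module.End.hasEigenvalue_iff_mem_spectrum.mpr <| by
      rw [spectrum_toLin']; exact hH.eigenvalues_mem_spectrum_real i
  rw [Pi.zero_apply]
  simp only [Metric.mem_closedBall, Real.dist_eq, Real.norm_eq_abs] at hk
  linarith [(abs_le.mp hk).1, hdom k]

theorem PosDef.posDef_fromBlocks₁₁_iff {m : Type*} [Fintype m] [DecidableEq m]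
    {A : Matrix m m ℝ} (B : Matrix m n ℝ) (D : Matrix n n ℝ) (hA : A.PosDef) [Invertible A] :
    (fromBlocks A B Bᴴ D).PosDef ↔ (D - Bᴴ * A⁻¹ * B).PosDef := by
  have hdet : (fromBlocks A B Bᴴ D).det = A.det * (D - Bᴴ * A⁻¹ * B).det := by
    rw [det_fromBlocks₁₁, invOf_eq_nonsing_inv]
  constructor
  · intro h
    have hS := (hA.fromBlocks₁₁ B D).mp h.posSemidef
    exact hS.posDef_iff_det_ne_zero.mpr (right_ne_zero_of_mul (hdet ▸ h.det_pos.ne'))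
  · intro h
    have hM := (hA.fromBlocks₁₁ B D).mpr h.posSemidef
    exact hM.posDef_iff_det_ne_zero.mpr (hdet ▸ mul_ne_zero hA.det_pos.ne' h.det_pos.ne')

open scoped MatrixOrder in
theorem PosSemidef.inv_one_add_sub_one_sub_mul_self {Y : Matrix n n ℝ} (hY : Y.PosSemidef)
    (hY1 : (1 - Y).PosSemidef) : ((1 + Y)⁻¹ - (1 - Y) * (1 - Y)).PosSemidef := by
  have hspec : ∀ t ∈ spectrum ℝ Y, 0 ≤ t ∧ t ≤ 1 := by
    intro t ht
    refine ⟨spectrum_nonneg_of_nonneg hY.nonneg ht, ?_⟩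
    have : 1 - t ∈ spectrum ℝ (1 - Y) := by
      rw [← map_one (algebraMap ℝ (Matrix n n ℝ)), ← spectrum.singleton_sub_eq]
      exact Set.sub_mem_sub rfl ht
    linarith [spectrum_nonneg_of_nonneg hY1.nonneg this]
  have hadd : cfc (fun t : ℝ => 1 + t) Y = 1 + Y := by
    rw [cfc_const_add 1 (fun t => t) Y, cfc_id' ℝ Y, map_one]
  have hsub : cfc (fun t : ℝ => 1 - t) Y = 1 - Y := by
    rw [cfc_sub (fun _ => 1) (fun t => t) Y, cfc_const_one ℝ Y, cfc_id' ℝ Y]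
  have hinv : (1 + Y)⁻¹ = cfc (fun t : ℝ => (1 + t)⁻¹) Y := by
    rw [cfc_inv (fun t => 1 + t) Y fun t ht => by linarith [hspec t ht], hadd,
      nonsing_inv_eq_ringInverse]
  have hinvc : ContinuousOn (fun t : ℝ => (1 + t)⁻¹) (spectrum ℝ Y) :=
    ContinuousOn.inv₀ (by fun_prop) fun t ht => by linarith [hspec t ht]
  rw [hinv, ← hsub, ← cfc_mul .., ← cfc_sub _ _ Y hinvc]
  refine (cfc_nonneg fun t ht => ?_).posSemidef
  obtain ⟨h0, h1⟩ := hspec t ht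
  rw [sub_nonneg, ← one_div, le_div_iff₀ (by linarith)]
  nlinarith [mul_nonneg (mul_nonneg h0 h0) (sub_nonneg.2 h1)]

open scoped MatrixOrder in
theorem PosDef.posSemidef_inv_add_sub {D L : Matrix n n ℝ} (hD : D.PosDef) (hL : L.PosSemidef)
    (hDL : (D - L).PosSemidef) :
    ((D + L)⁻¹ - D⁻¹ * (D - L) * D⁻¹ * (D - L) * D⁻¹).PosSemidef := by
  set S := CFC.sqrt D
  have hSS : S * S = D := CFC.sqrt_mul_sqrt_self D hD.posSemidef.nonneg
  have hS : IsUnit S.det :=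
    (isUnit_iff_isUnit_det S).mp ((CFC.isUnit_sqrt_iff D hD.posSemidef.nonneg).mpr hD.isUnit)
  set E := S⁻¹
  have hSE : S * E = 1 := mul_nonsing_inv S hS
  have hES : E * S = 1 := nonsing_inv_mul S hS
  have hEH : Eᴴ = E := by
    rw [conjTranspose_nonsing_inv, (CFC.sqrt_nonneg D).posSemidef.isHermitian.eq]
  have conj : ∀ K : Matrix n n ℝ, K.PosSemidef → (E * K * E).PosSemidef := fun K hK => by
    simpa only [hEH] using hK.conjTranspose_mul_mul_same E
  have hsub : 1 - E * L * E = E * (D - L) * E := by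
    rw [← hSS, show E * (S * S - L) * E = (E * S) * (S * E) - E * L * E by noncomm_ring, hES,
      hSE, one_mul]
  have hadd : D + L = S * (1 + E * L * E) * S := by
    rw [← hSS, show S * (1 + E * L * E) * S = S * S + (S * E) * L * (E * S) by noncomm_ring,
      hES, hSE, one_mul, mul_one]
  have hinv : (D + L)⁻¹ = E * (1 + E * L * E)⁻¹ * E := by
    rw [hadd, mul_inv_rev, mul_inv_rev, ← Matrix.mul_assoc]
  have hDinv : D⁻¹ = E * E := by rw [← hSS, mul_inv_rev]
  have key := PosSemidef.inv_one_add_sub_one_sub_mul_self (conj L hL) (hsub ▸ conj _ hDL)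
  convert conj _ key using 1
  rw [hinv, hDinv, hsub]
  noncomm_ring

theorem PosDef.posDef_half_inv_add_half {D L : Matrix n n ℝ} (hD : D.PosDef) (hL : L.IsSymm) :
    ((1 / 2 : ℝ) • D⁻¹ + (1 / 2 : ℝ) • (D⁻¹ * (D - L) * D⁻¹ * (D - L) * D⁻¹)).PosDef := by
  have hK : ((D - L) * D⁻¹)ᴴ = D⁻¹ * (D - L) := by
    rw [conjTranspose_mul, hD.isHermitian.inv.eq, conjTranspose_sub, hD.isHermitian.eq,
      conjTranspose_eq_transpose_of_trivial, hL.eq]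
  have hW := hD.inv.posSemidef.conjTranspose_mul_mul_same ((D - L) * D⁻¹)
  rw [hK, ← Matrix.mul_assoc, Matrix.mul_assoc _ D⁻¹ (D - L), ← Matrix.mul_assoc] at hW
  exact (hD.inv.smul (by norm_num)).add_posSemidef (hW.smul (by norm_num))

theorem inv_diagonal_of_ne_zero {d : n → ℝ} (hd : ∀ i, d i ≠ 0) :
    (diagonal d)⁻¹ = diagonal d⁻¹ :=
  inv_eq_left_inv <| by
    rw [diagonal_mul_diagonal, ← diagonal_one]
    exact congrArg diagonal (funext fun i => inv_mul_cancel₀ (hd i))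

end

theorem mul_diagonal_mul_apply {l m o : Type*} [Fintype m] [DecidableEq m]
    (A : Matrix l m ℝ) (w : m → ℝ) (B : Matrix m o ℝ) (i : l) (j : o) :
    (A * diagonal w * B) i j = ∑ k, A i k * w k * B k j := by
  rw [mul_apply]
  simp only [mul_diagonal]

theorem sum_apply_eq_mulVec_one {m o : Type*} [Fintype o] (A : Matrix m o ℝ) (i : m) :
    ∑ j, A i j = (A *ᵥ 1) i := by
  simp [mulVec, dotProduct]

theorem sum_apply_eq_one_vecMul {m o : Type*} [Fintype m] (A : Matrix m o ℝ) (j : o) :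
    ∑ i, A i j = (1 ᵥ* A) j := by
  simp [vecMul, dotProduct]

theorem offDiag_nonpos_fromBlocks_iff {m n : Type*} {A : Matrix m m ℝ} {B : Matrix m n ℝ}
    {C : Matrix n m ℝ} {D : Matrix n n ℝ} :
    (∀ i j, i ≠ j → fromBlocks A B C D i j ≤ 0) ↔
      (∀ i j, i ≠ j → A i j ≤ 0) ∧ (∀ i j, B i j ≤ 0) ∧ (∀ i j, C i j ≤ 0) ∧
        ∀ i j, i ≠ j → D i j ≤ 0 := by
  refine ⟨fun h => ⟨fun i j hij => h (.inl i) (.inl j) (by simpa),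
    fun i j => h (.inl i) (.inr j) Sum.inl_ne_inr, fun i j => h (.inr i) (.inl j) Sum.inr_ne_inl,
    fun i j hij => h (.inr i) (.inr j) (by simpa)⟩, ?_⟩
  rintro ⟨hA, hB, hC, hD⟩ (i | i) (j | j) hij
  exacts [hA i j (by simpa using hij), hB i j, hC i j, hD i j (by simpa using hij)]

end Matrix

theorem Finset.sum_abs_eq_neg_sum {ι : Type*} {s : Finset ι} {f : ι → ℝ}
    (h : ∀ i ∈ s, f i ≤ 0) : ∑ i ∈ s, |f i| = -∑ i ∈ s, f i := by
  rw [← sum_neg_distrib]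
  exact sum_congr rfl fun i hi => abs_of_nonpos (h i hi)

section Blocks

variable {m n : Type*} [Fintype m] [Fintype n] [DecidableEq m] [DecidableEq n]

theorem Finset.sum_erase_inl {β : Type*} [AddCommGroup β] (f : m ⊕ n → β) (i : m) :
    ∑ j ∈ univ.erase (Sum.inl i), f j = ∑ j ∈ univ.erase i, f (Sum.inl j) + ∑ c, f (Sum.inr c) := by
  rw [sum_erase_eq_sub (mem_univ _), Fintype.sum_sum_type, sum_erase_eq_sub (mem_univ _)]
  abel

theorem Finset.sum_erase_inr {β : Type*} [AddCommGroup β] (f : m ⊕ n → β) (c : n) :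
    ∑ j ∈ univ.erase (Sum.inr c), f j = ∑ i, f (Sum.inl i) + ∑ j ∈ univ.erase c, f (Sum.inr j) := by
  rw [sum_erase_eq_sub (mem_univ _), Fintype.sum_sum_type, sum_erase_eq_sub (mem_univ _)]
  abel

theorem Matrix.sum_abs_erase_le_fromBlocks_iff {A : Matrix m m ℝ} {B : Matrix m n ℝ}
    {C : Matrix n m ℝ} {D : Matrix n n ℝ} :
    (∀ i, ∑ j ∈ univ.erase i, |fromBlocks A B C D i j| ≤ fromBlocks A B C D i i) ↔
      (∀ i, ∑ j ∈ univ.erase i, |A i j| + ∑ c, |B i c| ≤ A i i) ∧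
        ∀ c, ∑ i, |C c i| + ∑ j ∈ univ.erase c, |D c j| ≤ D c c := by
  simp only [Sum.forall, sum_erase_inl, sum_erase_inr, fromBlocks_apply₁₁, fromBlocks_apply₁₂,
    fromBlocks_apply₂₁, fromBlocks_apply₂₂]

end Blocks

theorem schurElimF_fromBlocks {m n : Type*} [Fintype m] [Fintype n] [DecidableEq m]
    (A : Matrix m m ℝ) (B : Matrix m n ℝ) (C : Matrix n m ℝ) (D : Matrix n n ℝ) :
    schurElimF (fromBlocks A B C D) = D - C * A⁻¹ * B := by
  simp [schurElimF]

theorem isLaplacian_diagonal_mulVec_one_sub {n : Type*} [Fintype n] [DecidableEq n]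
    {P : Matrix n n ℝ} (hP : P.IsSymm) (hP0 : ∀ i j, 0 ≤ P i j) :
    IsLaplacian (diagonal (P *ᵥ 1) - P) := by
  refine ⟨(isSymm_diagonal _).sub hP, fun i j hij => ?_, fun i => ?_⟩
  · simpa [diagonal_apply_ne _ hij] using hP0 i j
  · simp [sum_sub_distrib, mulVec, dotProduct, diagonal_apply]

namespace IsLaplacian

variable {n : Type*} [Fintype n] [DecidableEq n] {L : Matrix n n ℝ}

theorem sum_abs_erase (hL : IsLaplacian L) (i : n) : ∑ j ∈ univ.erase i, |L i j| = L i i := by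
  have h := hL.2.2 i
  rw [← add_sum_erase _ _ (mem_univ i)] at h
  rw [sum_abs_eq_neg_sum fun j hj => hL.2.1 i j (ne_of_mem_erase hj).symm]
  linarith

theorem diag_nonneg (hL : IsLaplacian L) (i : n) : 0 ≤ L i i :=
  hL.sum_abs_erase i ▸ sum_nonneg fun _ _ => abs_nonneg _

theorem posSemidef (hL : IsLaplacian L) : L.PosSemidef :=
  hL.1.posSemidef_of_sum_abs_le fun i => (hL.sum_abs_erase i).le

theorem sum_abs_erase_diagonal_add (hL : IsLaplacian L) (d : n → ℝ) (i : n) :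
    ∑ j ∈ univ.erase i, |(diagonal d + L) i j| = L i i := by
  rw [← hL.sum_abs_erase i]
  exact sum_congr rfl fun j hj => by
    rw [Matrix.add_apply, diagonal_apply_ne _ (ne_of_mem_erase hj).symm, zero_add]

theorem sum_abs_erase_diagonal_sub (hL : IsLaplacian L) (d : n → ℝ) (i : n) :
    ∑ j ∈ univ.erase i, |(diagonal d - L) i j| = L i i := by
  rw [← hL.sum_abs_erase i]
  exact sum_congr rfl fun j hj => by
    rw [Matrix.sub_apply, diagonal_apply_ne _ (ne_of_mem_erase hj).symm, zero_sub, abs_neg]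

theorem diagonal_sub_apply_nonneg (hL : IsLaplacian L) {d : n → ℝ} (hLd : ∀ i, L i i ≤ d i)
    (i j : n) : 0 ≤ (diagonal d - L) i j := by
  rcases eq_or_ne i j with rfl | hij
  · simpa using hLd i
  · simpa [diagonal_apply_ne _ hij] using hL.2.1 i j hij

theorem posSemidef_diagonal_sub (hL : IsLaplacian L) {d : n → ℝ} (hLd : ∀ i, 2 * L i i ≤ d i) :
    (diagonal d - L).PosSemidef := by
  refine IsSymm.posSemidef_of_sum_abs_le ((isSymm_diagonal d).sub hL.1) fun i => ?_
  rw [hL.sum_abs_erase_diagonal_sub, Matrix.sub_apply, diagonal_apply_eq]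
  linarith [hLd i]

theorem diagonal_sub_mulVec_one (hL : IsLaplacian L) (d : n → ℝ) : (diagonal d - L) *ᵥ 1 = d := by
  ext i
  simpa [sub_mulVec, mulVec, dotProduct, diagonal_apply] using hL.2.2 i

theorem one_vecMul_diagonal_sub (hL : IsLaplacian L) (d : n → ℝ) : 1 ᵥ* (diagonal d - L) = d := by
  rw [← mulVec_transpose, ((isSymm_diagonal d).sub hL.1).eq, hL.diagonal_sub_mulVec_one]

end IsLaplacian

theorem IsStronglyDD.mul_diag_le {n : Type*} [Fintype n] [DecidableEq n] {α : ℝ} {d : n → ℝ}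
    {L : Matrix n n ℝ} (hL : IsLaplacian L) (h : IsStronglyDD α (diagonal d + L)) (i : n) :
    α * L i i ≤ d i := by
  have hi := h i
  rw [hL.sum_abs_erase_diagonal_add, Matrix.add_apply, diagonal_apply_eq] at hi
  linarith

section LastStep

variable {F C : Type*} [Fintype F] [DecidableEq F]
  {d : F → ℝ} {L : Matrix F F ℝ} {MFC : Matrix F C ℝ} {MCC : Matrix C C ℝ}

theorem neg_one_le_inv_diagonal_mulVec_mulVec_one [Fintype C] (hd : ∀ i, 0 < d i)
    (hB : ∀ i c, MFC i c ≤ 0) (hBd : ∀ i, ∑ c, |MFC i c| ≤ d i) (i : F) :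
    -1 ≤ ((diagonal d)⁻¹ *ᵥ (MFC *ᵥ 1)) i := by
  rw [inv_diagonal_of_ne_zero fun i => (hd i).ne', mulVec_diagonal, Pi.inv_apply,
    ← sum_apply_eq_mulVec_one, ← neg_neg (∑ c, MFC i c), ← sum_abs_eq_neg_sum fun c _ => hB i c,
    mul_neg, neg_le_neg_iff, inv_mul_le_one₀ (hd i)]
  exact hBd i

theorem transpose_mul_inv_diagonal_mul_apply_nonneg (hd : ∀ i, 0 < d i)
    (hB : ∀ i c, MFC i c ≤ 0) (c c' : C) : 0 ≤ (MFCᵀ * (diagonal d)⁻¹ * MFC) c c' := by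
  rw [inv_diagonal_of_ne_zero fun i => (hd i).ne', mul_diagonal_mul_apply]
  exact sum_nonneg fun i _ => mul_nonneg_of_nonpos_of_nonpos
    (mul_nonpos_of_nonpos_of_nonneg (hB i c) (inv_nonneg.2 (hd i).le)) (hB i c')

theorem transpose_mul_inv_diagonal_mul_mulVec_one_le [Fintype C] (hd : ∀ i, 0 < d i)
    (hB : ∀ i c, MFC i c ≤ 0) (hBd : ∀ i, ∑ c, |MFC i c| ≤ d i) (c : C) :
    ((MFCᵀ * (diagonal d)⁻¹ * MFC) *ᵥ 1) c ≤ ∑ i, |MFC i c| := by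
  rw [← mulVec_mulVec, ← mulVec_mulVec, mulVec_transpose, sum_abs_eq_neg_sum fun i _ => hB i c,
    ← sum_neg_distrib]
  refine sum_le_sum fun i _ => ?_
  nlinarith [hB i c, neg_one_le_inv_diagonal_mulVec_mulVec_one hd hB hBd i]

theorem diagonal_sub_mul_inv_diagonal_mul_apply_nonpos (hd : ∀ i, 0 < d i) (hL : IsLaplacian L)
    (hLd : ∀ i, L i i ≤ d i) (hB : ∀ i c, MFC i c ≤ 0) (i : F) (c : C) :
    ((diagonal d - L) * (diagonal d)⁻¹ * MFC) i c ≤ 0 := by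
  rw [inv_diagonal_of_ne_zero fun i => (hd i).ne', mul_diagonal_mul_apply]
  exact sum_nonpos fun j _ => mul_nonpos_of_nonneg_of_nonpos
    (mul_nonneg (hL.diagonal_sub_apply_nonneg hLd i j) (inv_nonneg.2 (hd j).le)) (hB j c)

theorem sum_abs_diagonal_sub_mul_inv_diagonal_mul_le [Fintype C] (hd : ∀ i, 0 < d i)
    (hL : IsLaplacian L) (hLd : ∀ i, L i i ≤ d i) (hB : ∀ i c, MFC i c ≤ 0)
    (hBd : ∀ i, ∑ c, |MFC i c| ≤ d i) (i : F) :
    ∑ c, |((diagonal d - L) * (diagonal d)⁻¹ * MFC) i c| ≤ d i := by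
  rw [sum_abs_eq_neg_sum fun c _ => diagonal_sub_mul_inv_diagonal_mul_apply_nonpos hd hL hLd hB i c,
    sum_apply_eq_mulVec_one, ← mulVec_mulVec, ← mulVec_mulVec]
  conv_rhs => rw [← hL.diagonal_sub_mulVec_one d]
  have hv := neg_one_le_inv_diagonal_mulVec_mulVec_one hd hB hBd
  generalize (diagonal d)⁻¹ *ᵥ (MFC *ᵥ 1) = v at hv ⊢
  simp only [mulVec, dotProduct, Pi.one_apply, mul_one, ← sum_neg_distrib]
  exact sum_le_sum fun j _ => by nlinarith [hL.diagonal_sub_apply_nonneg hLd i j, hv j]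

theorem sum_abs_diagonal_sub_mul_inv_diagonal_mul_eq (hd : ∀ i, 0 < d i) (hL : IsLaplacian L)
    (hLd : ∀ i, L i i ≤ d i) (hB : ∀ i c, MFC i c ≤ 0) (c : C) :
    ∑ i, |((diagonal d - L) * (diagonal d)⁻¹ * MFC) i c| = ∑ i, |MFC i c| := by
  have hd1 : d ᵥ* (diagonal d)⁻¹ = 1 := by
    ext i
    rw [inv_diagonal_of_ne_zero fun i => (hd i).ne', vecMul_diagonal, Pi.inv_apply,
      mul_inv_cancel₀ (hd i).ne', Pi.one_apply]
  rw [sum_abs_eq_neg_sum fun i _ => diagonal_sub_mul_inv_diagonal_mul_apply_nonpos hd hL hLd hB i c,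
    sum_abs_eq_neg_sum fun i _ => hB i c, sum_apply_eq_one_vecMul, sum_apply_eq_one_vecMul,
    ← vecMul_vecMul, ← vecMul_vecMul, hL.one_vecMul_diagonal_sub, hd1]

theorem transpose_diagonal_sub_mul_inv_diagonal_mul (hL : IsLaplacian L) :
    ((diagonal d - L) * (diagonal d)⁻¹ * MFC)ᵀ = MFCᵀ * (diagonal d)⁻¹ * (diagonal d - L) := by
  rw [transpose_mul, transpose_mul, transpose_nonsing_inv, diagonal_transpose, transpose_sub,
    diagonal_transpose, hL.1.eq, Matrix.mul_assoc]

theorem schurElimF_fromBlocks_inv [Fintype C] (Z : Matrix F F ℝ) (hZ : IsUnit Z.det) :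
    schurElimF (fromBlocks Z⁻¹ MFC MFCᵀ MCC) = MCC - MFCᵀ * Z * MFC := by
  rw [schurElimF_fromBlocks, nonsing_inv_nonsing_inv Z hZ]

variable [Fintype C] [DecidableEq C]

theorem posSemidef_sub_diagonal_mulVec_one (hd : ∀ i, 0 < d i) (hB : ∀ i c, MFC i c ≤ 0)
    (hBd : ∀ i, ∑ c, |MFC i c| ≤ d i) (hMCC : MCC.IsSymm)
    (hrowC : ∀ c, ∑ i, |MFC i c| + ∑ c' ∈ univ.erase c, |MCC c c'| ≤ MCC c c) :
    (MCC - diagonal ((MFCᵀ * (diagonal d)⁻¹ * MFC) *ᵥ 1)).PosSemidef := by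
  refine IsSymm.posSemidef_of_sum_abs_le (hMCC.sub (isSymm_diagonal _)) fun c => ?_
  have hoff : ∀ c' ∈ univ.erase c, |(MCC - diagonal ((MFCᵀ * (diagonal d)⁻¹ * MFC) *ᵥ 1)) c c'|
      = |MCC c c'| := fun c' hc' => by
    rw [Matrix.sub_apply, diagonal_apply_ne _ (ne_of_mem_erase hc').symm, sub_zero]
  rw [sum_congr rfl hoff, Matrix.sub_apply, diagonal_apply_eq]
  linarith [hrowC c, transpose_mul_inv_diagonal_mul_mulVec_one_le hd hB hBd c]

theorem posDef_fromBlocks_diagonal_diagonal_sub (hd : ∀ i, 0 < d i) (hL : IsLaplacian L)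
    (hLd : ∀ i, 2 * L i i ≤ d i) (hMpd : (fromBlocks (diagonal d + L) MFC MFCᵀ MCC).PosDef)
    (hMCCD : (MCC - diagonal ((MFCᵀ * (diagonal d)⁻¹ * MFC) *ᵥ 1)).PosSemidef) :
    (fromBlocks (diagonal d) ((diagonal d - L) * (diagonal d)⁻¹ * MFC)
      (MFCᵀ * (diagonal d)⁻¹ * (diagonal d - L))
      ((2 : ℝ) • MCC - diagonal ((MFCᵀ * (diagonal d)⁻¹ * MFC) *ᵥ 1))).PosDef := by
  have hX : (diagonal d).PosDef := posDef_diagonal_iff.mpr hd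
  have hXL : (diagonal d + L).PosDef :=
    toBlocks_fromBlocks₁₁ (diagonal d + L) MFC MFCᵀ MCC ▸ hMpd.submatrix Sum.inl_injective
  have := hX.isUnit.invertible
  have := hXL.isUnit.invertible
  have hS := (hXL.posDef_fromBlocks₁₁_iff MFC MCC).mp
    (by rwa [conjTranspose_eq_transpose_of_trivial])
  rw [← transpose_diagonal_sub_mul_inv_diagonal_mul hL, ← conjTranspose_eq_transpose_of_trivial,
    hX.posDef_fromBlocks₁₁_iff]
  have hK := (hX.posSemidef_inv_add_sub hL.posSemidef
    (hL.posSemidef_diagonal_sub hLd)).conjTranspose_mul_mul_same MFC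
  convert hS.add_posSemidef (hMCCD.add hK) using 1
  rw [conjTranspose_eq_transpose_of_trivial, conjTranspose_eq_transpose_of_trivial,
    transpose_diagonal_sub_mul_inv_diagonal_mul hL]
  simp only [Matrix.mul_sub, Matrix.sub_mul, Matrix.mul_assoc, two_smul]
  abel

theorem isLaplacian_schurElimF_fromBlocks_diagonal (hd : ∀ i, 0 < d i)
    (hB : ∀ i c, MFC i c ≤ 0) :
    IsLaplacian (schurElimF (fromBlocks (diagonal d) MFC MFCᵀ
      (diagonal ((MFCᵀ * (diagonal d)⁻¹ * MFC) *ᵥ 1)))) := by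
  rw [schurElimF_fromBlocks]
  refine isLaplacian_diagonal_mulVec_one_sub ?_ (transpose_mul_inv_diagonal_mul_apply_nonneg hd hB)
  rw [IsSymm, transpose_mul, transpose_mul, transpose_nonsing_inv, diagonal_transpose,
    transpose_transpose, Matrix.mul_assoc]

theorem isSDDM_fromBlocks_diagonal_diagonal_sub (hd : ∀ i, 0 < d i) (hL : IsLaplacian L)
    (hLd : ∀ i, 2 * L i i ≤ d i) (hM : IsSDDM (fromBlocks (diagonal d + L) MFC MFCᵀ MCC)) :
    IsSDDM (fromBlocks (diagonal d) ((diagonal d - L) * (diagonal d)⁻¹ * MFC)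
      (MFCᵀ * (diagonal d)⁻¹ * (diagonal d - L))
      ((2 : ℝ) • MCC - diagonal ((MFCᵀ * (diagonal d)⁻¹ * MFC) *ᵥ 1))) := by
  obtain ⟨hsymm, hpd, hoff, hdom⟩ := hM
  obtain ⟨-, -, -, hMCC⟩ := isSymm_fromBlocks_iff.mp hsymm
  obtain ⟨-, hB, -, hMCCoff⟩ := offDiag_nonpos_fromBlocks_iff.mp hoff
  obtain ⟨hrowF, hrowC⟩ := sum_abs_erase_le_fromBlocks_iff.mp hdom
  simp only [transpose_apply] at hrowC
  have hLd' : ∀ i, L i i ≤ d i := fun i => by linarith [hLd i, hL.diag_nonneg i]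
  have hBd : ∀ i, ∑ c, |MFC i c| ≤ d i := fun i => by
    have := hrowF i
    rw [hL.sum_abs_erase_diagonal_add, Matrix.add_apply, diagonal_apply_eq] at this
    linarith
  have hDle := transpose_mul_inv_diagonal_mul_mulVec_one_le hd hB hBd
  have hB₂ := diagonal_sub_mul_inv_diagonal_mul_apply_nonpos hd hL hLd' hB
  have hT := transpose_diagonal_sub_mul_inv_diagonal_mul (d := d) (MFC := MFC) hL
  refine ⟨IsSymm.fromBlocks (isSymm_diagonal d) hT ((hMCC.smul 2).sub (isSymm_diagonal _)),
    posDef_fromBlocks_diagonal_diagonal_sub hd hL hLd hpd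
      (posSemidef_sub_diagonal_mulVec_one hd hB hBd hMCC hrowC),
    offDiag_nonpos_fromBlocks_iff.mpr ⟨fun i j hij => (diagonal_apply_ne _ hij).le, hB₂,
      fun c i => hT ▸ hB₂ i c, fun c c' hcc' => ?_⟩,
    sum_abs_erase_le_fromBlocks_iff.mpr ⟨fun i => ?_, fun c => ?_⟩⟩
  · simp only [Matrix.sub_apply, Matrix.smul_apply, diagonal_apply_ne _ hcc', sub_zero, smul_eq_mul]
    linarith [hMCCoff c c' hcc']
  · rw [sum_eq_zero fun j hj => by rw [diagonal_apply_ne _ (ne_of_mem_erase hj).symm, abs_zero],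
      zero_add, diagonal_apply_eq]
    exact sum_abs_diagonal_sub_mul_inv_diagonal_mul_le hd hL hLd' hB hBd i
  · have hcol : ∑ i, |(MFCᵀ * (diagonal d)⁻¹ * (diagonal d - L)) c i| = ∑ i, |MFC i c| := by
      rw [← hT]
      exact sum_abs_diagonal_sub_mul_inv_diagonal_mul_eq hd hL hLd' hB c
    have hoff : ∀ c' ∈ univ.erase c, |((2 : ℝ) • MCC
        - diagonal ((MFCᵀ * (diagonal d)⁻¹ * MFC) *ᵥ 1)) c c'| = 2 * |MCC c c'| := fun c' hc' => by
      rw [Matrix.sub_apply, diagonal_apply_ne _ (ne_of_mem_erase hc').symm, sub_zero,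
        Matrix.smul_apply, smul_eq_mul, abs_mul, abs_two]
    rw [hcol, sum_congr rfl hoff, ← mul_sum, Matrix.sub_apply, diagonal_apply_eq,
      Matrix.smul_apply, smul_eq_mul]
    linarith [hDle c, hrowC c]

end LastStep

theorem last_step_splitting_general {F C : Type*} [Fintype F] [Fintype C] [DecidableEq F] [DecidableEq C]
    (X L : Matrix F F ℝ) (MFC : Matrix F C ℝ) (MCF : Matrix C F ℝ) (MCC : Matrix C C ℝ)
    (α : ℝ) (hα : 4 ≤ α)
    (hXdiag : ∀ i j, i ≠ j → X i j = 0) (hXpos : ∀ i, 0 < X i i)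
    (hL : IsLaplacian L)
    (hM : IsSDDM (Matrix.fromBlocks (X + L) MFC MCF MCC))
    (hsdd : IsStronglyDD α (X + L)) :
    let Z := (1 / 2 : ℝ) • X⁻¹ + (1 / 2 : ℝ) • (X⁻¹ * (X - L) * X⁻¹ * (X - L) * X⁻¹)
    let Mlast := Matrix.fromBlocks Z⁻¹ MFC MCF MCC
    let M₁ := Matrix.fromBlocks X MFC MCF
        (Matrix.diagonal ((MCF * X⁻¹ * MFC) *ᵥ fun _ => (1 : ℝ)))
    let M₂ := Matrix.fromBlocks X ((X - L) * X⁻¹ * MFC) (MCF * X⁻¹ * (X - L))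
        ((2 : ℝ) • MCC - Matrix.diagonal ((MCF * X⁻¹ * MFC) *ᵥ fun _ => (1 : ℝ)))
    IsLaplacian (schurElimF M₁) ∧ IsSDDM M₂ ∧
      schurElimF Mlast = (1 / 2 : ℝ) • (schurElimF M₁ + schurElimF M₂) := by
  intro Z Mlast M₁ M₂
  obtain ⟨d, rfl⟩ : ∃ d, X = diagonal d := ⟨X.diag, (IsDiag.diagonal_diag hXdiag).symm⟩
  have hd : ∀ i, 0 < d i := by simpa using hXpos
  obtain rfl : MFCᵀ = MCF := (isSymm_fromBlocks_iff.mp hM.1).2.1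
  have hLd : ∀ i, 2 * L i i ≤ d i := fun i => by
    nlinarith [hsdd.mul_diag_le hL i, hL.diag_nonneg i]
  have hB : ∀ i c, MFC i c ≤ 0 := (offDiag_nonpos_fromBlocks_iff.mp hM.2.2.1).2.1
  have hZ : IsUnit Z.det := (isUnit_iff_isUnit_det Z).mp
    ((posDef_diagonal_iff.mpr hd).posDef_half_inv_add_half hL.1).isUnit
  refine ⟨isLaplacian_schurElimF_fromBlocks_diagonal hd hB,
    isSDDM_fromBlocks_diagonal_diagonal_sub hd hL hLd hM, ?_⟩
  simp only [Mlast, M₁, M₂, Z, schurElimF_fromBlocks_inv _ hZ, schurElimF_fromBlocks]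
  simp only [Matrix.mul_add, Matrix.add_mul, Matrix.mul_smul, Matrix.smul_mul, Matrix.mul_assoc]
  module

/-- splitting for the last step: for an SDDM matrix
`M = [[X + L, M_FC],[M_CF, M_CC]]` whose `FF` block is α-strongly diagonally
dominant with `α ≥ 4` (`X` nonnegative diagonal with positive diagonal, `L`
Laplacian), with `Z = ½X⁻¹ + ½X⁻¹(X−L)X⁻¹(X−L)X⁻¹` and `M^last` obtained from
`M` by replacing the `FF` block with `Z⁻¹`, the matrices
`M₁ = [[X, M_FC],[M_CF, diag(M_CF·X⁻¹·M_FC·1)]]` and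
`M₂ = [[X, (X−L)·X⁻¹·M_FC],[M_CF·X⁻¹·(X−L), 2·M_CC − diag(M_CF·X⁻¹·M_FC·1)]]`
satisfy: `Schur(M₁,F)` is a Laplacian, `M₂` is SDDM, and
`Schur(M^last,F) = ½(Schur(M₁,F) + Schur(M₂,F))`. -/
theorem last_step_splitting {F C : Type*} [Fintype F] [Fintype C] [DecidableEq F] [DecidableEq C]
    (X L : Matrix F F ℝ) (MFC : Matrix F C ℝ) (MCF : Matrix C F ℝ) (MCC : Matrix C C ℝ)
    (α : ℝ) (hα : 4 ≤ α)
    (hXdiag : ∀ i j, i ≠ j → X i j = 0) (hXnn : ∀ i, 0 ≤ X i i) (hXpos : ∀ i, 0 < X i i)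
    (hL : IsLaplacian L)
    (hM : IsSDDM (Matrix.fromBlocks (X + L) MFC MCF MCC))
    (hsdd : IsStronglyDD α (X + L)) :
    let Z := (1 / 2 : ℝ) • X⁻¹ + (1 / 2 : ℝ) • (X⁻¹ * (X - L) * X⁻¹ * (X - L) * X⁻¹)
    let Mlast := Matrix.fromBlocks Z⁻¹ MFC MCF MCC
    let M₁ := Matrix.fromBlocks X MFC MCF
        (Matrix.diagonal ((MCF * X⁻¹ * MFC) *ᵥ fun _ => (1 : ℝ)))
    let M₂ := Matrix.fromBlocks X ((X - L) * X⁻¹ * MFC) (MCF * X⁻¹ * (X - L))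
        ((2 : ℝ) • MCC - Matrix.diagonal ((MCF * X⁻¹ * MFC) *ᵥ fun _ => (1 : ℝ)))
    IsLaplacian (schurElimF M₁) ∧ IsSDDM M₂ ∧
      schurElimF Mlast = (1 / 2 : ℝ) • (schurElimF M₁ + schurElimF M₂) :=
  last_step_splitting_general X L MFC MCF MCC α hα hXdiag hXpos hL hM hsdd
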